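/- arXiv:1407.1695 — 9 statements merged into one kernel-verified Lean document; each statement's English description precedes it below -/
import Mathlib

section
/- Let K be a field of characteristic 2 and n ≥ 3. The derived subalgebra of the Lie algebra o_I(n) of all symmetric n×n matrices over K (with the commutator bracket) is exactly ZD(n), the space of symmetric matrices with all diagonal entries equal to zero. -/
/-!
For symmetric `X`, `Y` one has `Y * X = (X * Y)ᵀ`, so `⁅X, Y⁆ = X * Y - (X * Y)ᵀ`: its diagonal
vanishes and, in characteristic 2, it is symmetric. Conversely, a symmetric matrix with zero
diagonal is `L + Lᵀ` with `L` its strictly upper triangular part, and `L + Lᵀ` is a sum of the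
matrices `c • (E i j + E j i)`, `i ≠ j`. Choosing a third index `k`, which exists as `n ≥ 3`,
`⁅c • (E i k + E k i), E k j + E j k⁆ = c • (E i j - E j i) = c • (E i j + E j i)`.
-/

section

variable {ι R : Type*}

theorem exists_ne_ne_of_three_le_card [Fintype ι] [DecidableEq ι] (h : 3 ≤ Fintype.card ι)
    (i j : ι) : ∃ k, k ≠ i ∧ k ≠ j := by
  have hcard : ({i, j} : Finset ι).card < Finset.univ.card :=
    (Finset.card_le_two).trans_lt h
  obtain ⟨k, -, hk⟩ := Finset.exists_mem_notMem_of_card_lt_card hcard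
  exact ⟨k, by simpa [not_or] using hk⟩

namespace Matrix

def symmZeroDiag (ι R : Type*) [Semiring R] : Submodule R (Matrix ι ι R) where
  carrier := {A | Aᵀ = A ∧ ∀ i, A i i = 0}
  add_mem' := by
    rintro A B ⟨hA, hA₀⟩ ⟨hB, hB₀⟩
    exact ⟨by rw [transpose_add, hA, hB], fun i => by simp [hA₀ i, hB₀ i]⟩
  zero_mem' := ⟨transpose_zero, fun _ => rfl⟩
  smul_mem' := by
    rintro c A ⟨hA, hA₀⟩
    exact ⟨by rw [transpose_smul, hA], fun i => by simp [hA₀ i]⟩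

def symmLieBrackets (ι R : Type*) [Fintype ι] [Ring R] : Set (Matrix ι ι R) :=
  {Z | ∃ X Y : Matrix ι ι R, Xᵀ = X ∧ Yᵀ = Y ∧ Z = ⁅X, Y⁆}

theorem lie_eq_mul_sub_transpose [Fintype ι] [CommRing R] {X Y : Matrix ι ι R}
    (hX : Xᵀ = X) (hY : Yᵀ = Y) : ⁅X, Y⁆ = X * Y - (X * Y)ᵀ := by
  rw [Ring.lie_def, transpose_mul, hX, hY]

theorem sub_transpose_mem_symmZeroDiag [CommRing R] [CharP R 2] (A : Matrix ι ι R) :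
    A - Aᵀ ∈ symmZeroDiag ι R :=
  ⟨by ext i j; simp only [transpose_apply, sub_apply, CharTwo.sub_eq_add, add_comm],
    fun i => sub_self (A i i)⟩

theorem lie_mem_symmZeroDiag [Fintype ι] [CommRing R] [CharP R 2] {X Y : Matrix ι ι R}
    (hX : Xᵀ = X) (hY : Yᵀ = Y) : ⁅X, Y⁆ ∈ symmZeroDiag ι R := by
  rw [lie_eq_mul_sub_transpose hX hY]
  exact sub_transpose_mem_symmZeroDiag _

theorem lie_single_add_single [Fintype ι] [DecidableEq ι] [Ring R] {i j k : ι}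
    (hij : i ≠ j) (hki : k ≠ i) (hkj : k ≠ j) (c : R) :
    ⁅single i k c + single k i c, single k j 1 + single j k 1⁆ = single i j c - single j i c := by
  simp [Ring.lie_def, add_mul, mul_add, single_mul_single_of_ne, hij, hij.symm, hki, hki.symm,
    hkj, hkj.symm]

theorem exists_eq_add_transpose [AddMonoid R] {M : Matrix ι ι R} (hM : Mᵀ = M)
    (hM₀ : ∀ i, M i i = 0) : ∃ L : Matrix ι ι R, M = L + Lᵀ := by
  classical
  let _ : LinearOrder ι := WellOrderingRel.isWellOrder.linearOrder
  refine ⟨of fun i j => if i < j then M i j else 0, ?_⟩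
  ext a b
  rcases lt_trichotomy a b with h | rfl | h
  · simp [h, h.not_gt]
  · simp [hM₀]
  · simpa [h, h.not_gt] using (congrFun (congrFun hM a) b).symm

theorem add_transpose_mem_span_symmLieBrackets [Fintype ι] [DecidableEq ι] [CommRing R]
    [CharP R 2] (h : 3 ≤ Fintype.card ι) (L : Matrix ι ι R) :
    L + Lᵀ ∈ Submodule.span R (symmLieBrackets ι R) := by
  rw [matrix_eq_sum_single L]
  simp only [transpose_sum, transpose_single, ← Finset.sum_add_distrib]
  refine Submodule.sum_mem _ fun i _ => Submodule.sum_mem _ fun j _ => ?_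
  rcases eq_or_ne i j with rfl | hij
  · rw [← single_add, CharTwo.add_self_eq_zero, single_zero]
    exact zero_mem _
  · obtain ⟨k, hki, hkj⟩ := exists_ne_ne_of_three_le_card h i j
    refine Submodule.subset_span ⟨single i k (L i j) + single k i (L i j),
      single k j 1 + single j k 1, by simp [add_comm], by simp [add_comm], ?_⟩
    rw [lie_single_add_single hij hki hkj, sub_eq_add_neg, single_neg, CharTwo.neg_eq]

theorem span_symmLieBrackets [Fintype ι] [DecidableEq ι] [CommRing R] [CharP R 2]
    (h : 3 ≤ Fintype.card ι) : Submodule.span R (symmLieBrackets ι R) = symmZeroDiag ι R := by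
  refine le_antisymm (Submodule.span_le.2 ?_) fun M ⟨hM, hM₀⟩ => ?_
  · rintro _ ⟨X, Y, hX, hY, rfl⟩
    exact lie_mem_symmZeroDiag hX hY
  · obtain ⟨L, rfl⟩ := exists_eq_add_transpose hM hM₀
    exact add_transpose_mem_span_symmLieBrackets h L

end Matrix

end

open Matrix in
/-- Over a field of characteristic 2 and for `n ≥ 3`, the derived subalgebra of the
Lie algebra `o_I(n)` of all symmetric `n × n` matrices (with the commutator bracket)
is exactly `ZD(n)`, the space of symmetric matrices with zero diagonal. -/
theorem derived_oI_eq_ZD (K : Type*) [Field K] [CharP K 2] (n : ℕ) (hn : 3 ≤ n) :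
    ∀ M : Matrix (Fin n) (Fin n) K,
      M ∈ Submodule.span K
        {Z : Matrix (Fin n) (Fin n) K |
          ∃ X Y : Matrix (Fin n) (Fin n) K,
            X.transpose = X ∧ Y.transpose = Y ∧ Z = ⁅X, Y⁆} ↔
      (M.transpose = M ∧ ∀ i, M i i = 0) := fun M =>
  SetLike.ext_iff.mp (span_symmLieBrackets (by rwa [Fintype.card_fin])) M
end

section
/- Let A be an associative algebra over a field of characteristic 2. Then the superspace q(A) = A ⊕ Π(A), with even part A and odd part Π(A) (a copy of A with reversed parity), bracket [x,y] = xy + yx, [x,Π(y)] = Π(xy + yx), [Π(x),Π(y)] = xy + yx, and squaring (Π(x))² = x², satisfies the axioms of a Lie superalgebra (in particular the super Jacobi identity and the polarization identity relating the squaring to the bracket of odd elements). -/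
/-!
In characteristic 2 the anticommutator `x * y + y * x` is the commutator `⁅x, y⁆`, so the super
Jacobi identity of `q(A)` is the Jacobi identity of the Lie ring of `A`, and `[x², y] = [x, [x, y]]`
follows from `⁅x * x, y⁆ = x * ⁅x, y⁆ + ⁅x, y⁆ * x`, valid in every ring, whose right side is again
an anticommutator.
-/

section CharTwoRing

variable {A : Type*} [Ring A]

theorem add_self_eq_zero_of_two_eq_zero (h2 : (2 : A) = 0) (x : A) : x + x = 0 := by
  rw [← two_mul, h2, zero_mul]

theorem mul_add_mul_eq_lie (h2 : (2 : A) = 0) (x y : A) : x * y + y * x = ⁅x, y⁆ := by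
  rw [Ring.lie_def, sub_eq_add_neg,
    neg_eq_of_add_eq_zero_left (add_self_eq_zero_of_two_eq_zero h2 _)]

theorem mul_self_lie (x y : A) : ⁅x * x, y⁆ = x * ⁅x, y⁆ + ⁅x, y⁆ * x := by
  simp only [Ring.lie_def]
  noncomm_ring

theorem add_mul_self_add_mul_self_add_mul_self (h2 : (2 : A) = 0) (x y : A) :
    (x + y) * (x + y) + x * x + y * y = x * y + y * x := by
  calc (x + y) * (x + y) + x * x + y * y
      = x * y + y * x + (x * x + x * x) + (y * y + y * y) := by noncomm_ring
    _ = x * y + y * x := by simp only [add_self_eq_zero_of_two_eq_zero h2, add_zero]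

end CharTwoRing

theorem two_eq_zero_of_charP_two (K : Type*) [CommSemiring K] [CharP K 2] (A : Type*) [Semiring A]
    [Algebra K A] : (2 : A) = 0 := by
  rw [← map_ofNat (algebraMap K A) 2, CharTwo.two_eq_zero, map_zero]

/-- Over a field `K` of characteristic 2 and an associative algebra `A`, the
queerification `q(A) = A ⊕ Π(A)` with bracket given (on each pair of parities) by
`c x y = x*y + y*x` (note that in characteristic 2 the commutator and the
anticommutator coincide) and squaring `s x = x*x` on odd elements satisfies the
axioms of a Lie superalgebra: the bracket is alternating and bilinear, the super
Jacobi identity holds in all parities (which in characteristic 2, all signs being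
`+1`, is the single Leibniz identity for `c`), the squaring is quadratic, its
polarization reproduces the bracket of odd elements, and `[x², y] = [x,[x,y]]`. -/
theorem queerification_isLieSuperalgebra (K : Type*) [Field K] [CharP K 2]
    (A : Type*) [Ring A] [Algebra K A] :
    (∀ x : A, x * x + x * x = 0) ∧
    (∀ (a : K) (x y : A), (a • x) * y + y * (a • x) = a • (x * y + y * x)) ∧
    (∀ x y z : A,
      x * (y * z + z * y) + (y * z + z * y) * x =
        ((x * y + y * x) * z + z * (x * y + y * x)) +
        (y * (x * z + z * x) + (x * z + z * x) * y)) ∧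
    (∀ (a : K) (x : A), (a • x) * (a • x) = (a * a) • (x * x)) ∧
    (∀ x y : A, (x + y) * (x + y) + x * x + y * y = x * y + y * x) ∧
    (∀ x y : A, (x * x) * y + y * (x * x) = x * (x * y + y * x) + (x * y + y * x) * x) := by
  have h2 : (2 : A) = 0 := two_eq_zero_of_charP_two K A
  refine ⟨fun x => add_self_eq_zero_of_two_eq_zero h2 _, fun a x y => ?_, fun x y z => ?_,
    fun a x => ?_, add_mul_self_add_mul_self_add_mul_self h2, fun x y => ?_⟩
  · rw [smul_mul_assoc, mul_smul_comm, smul_add]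
  · simp only [mul_add_mul_eq_lie h2]
    exact LieRing.ofAssociativeRing.leibniz_lie x y z
  · rw [smul_mul_smul_comm]
  · simp only [mul_add_mul_eq_lie h2]
    rw [mul_self_lie, mul_add_mul_eq_lie h2]
end

section
/- Let g be a simple restricted Lie algebra over a field of characteristic 2. Then its queerification q(g) = g ⊕ Π(g), with bracket [x, Π(y)] = Π([x,y]) and squaring (Π(x))² = x^{[2]}, is a simple Lie superalgebra. -/
/-!
The even and odd parts of a homogeneous ideal of `q(g)` are Lie ideals of `g`, and bracketing
with an odd element `Π(x)` moves each part into the other. If the ideal is nonzero, one part is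
nonzero, hence all of `g` by simplicity; it then contains `[g, g] ≠ 0` in the other part, which is
therefore all of `g` as well.
-/

namespace LieAlgebra.IsSimple

variable {R L : Type*} [CommRing R] [LieRing L] [LieAlgebra R L]

theorem eq_top_of_forall_lie_mem (hL : IsSimple R L) {J : LieIdeal R L}
    (h : ∀ x y : L, ⁅x, y⁆ ∈ J) : J = ⊤ := by
  refine (hL.eq_bot_or_eq_top J).resolve_left fun hJ => hL.non_abelian ⟨fun x y => ?_⟩
  simpa [hJ] using h x y

end LieAlgebra.IsSimple

namespace Queerification

variable {R L : Type*} [CommRing R] [LieRing L] [LieAlgebra R L]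

/-- `L × L` models `q(L) = L ⊕ Π(L)`, with `(x, y)` standing for `x + Π(y)`. -/
def IsBracketClosed (I : Submodule R (L × L)) : Prop :=
  ∀ z : L × L, ∀ w ∈ I, ((⁅z.1, w.1⁆ + ⁅z.2, w.2⁆, ⁅z.1, w.2⁆ + ⁅z.2, w.1⁆) : L × L) ∈ I

def IsHomogeneous (I : Submodule R (L × L)) : Prop :=
  ∀ z ∈ I, ((z.1, 0) : L × L) ∈ I ∧ ((0, z.2) : L × L) ∈ I

variable {I : Submodule R (L × L)}

def evenPart (hI : IsBracketClosed I) : LieIdeal R L where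
  toSubmodule := I.comap (LinearMap.inl R L L)
  lie_mem {x m} hm := by simpa using hI (x, 0) (m, 0) hm

def oddPart (hI : IsBracketClosed I) : LieIdeal R L where
  toSubmodule := I.comap (LinearMap.inr R L L)
  lie_mem {x m} hm := by simpa using hI (x, 0) (0, m) hm

theorem mem_evenPart (hI : IsBracketClosed I) {x : L} : x ∈ evenPart hI ↔ ((x, 0) : L × L) ∈ I :=
  Iff.rfl

theorem mem_oddPart (hI : IsBracketClosed I) {y : L} : y ∈ oddPart hI ↔ ((0, y) : L × L) ∈ I :=
  Iff.rfl

theorem lie_mem_oddPart (hI : IsBracketClosed I) (x : L) {y : L} (hy : y ∈ evenPart hI) :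
    ⁅x, y⁆ ∈ oddPart hI :=
  (mem_oddPart hI).2 <| by simpa using hI (0, x) (y, 0) hy

theorem lie_mem_evenPart (hI : IsBracketClosed I) (x : L) {y : L} (hy : y ∈ oddPart hI) :
    ⁅x, y⁆ ∈ evenPart hI :=
  (mem_evenPart hI).2 <| by simpa using hI (0, x) (0, y) hy

theorem evenPart_ne_bot_or_oddPart_ne_bot (hI : IsBracketClosed I) (hhom : IsHomogeneous I)
    (hne : I ≠ ⊥) : evenPart hI ≠ ⊥ ∨ oddPart hI ≠ ⊥ := by
  obtain ⟨z, hz, hz0⟩ := Submodule.exists_mem_ne_zero_of_ne_bot hne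
  by_contra! h
  obtain ⟨h1, h2⟩ := hhom z hz
  have hz1 : z.1 = 0 := by simpa [h.1] using (mem_evenPart hI).2 h1
  have hz2 : z.2 = 0 := by simpa [h.2] using (mem_oddPart hI).2 h2
  exact hz0 (Prod.ext hz1 hz2)

theorem eq_top_of_evenPart_eq_top_of_oddPart_eq_top (hI : IsBracketClosed I)
    (h0 : evenPart hI = ⊤) (h1 : oddPart hI = ⊤) : I = ⊤ := by
  refine eq_top_iff.2 fun w _ => ?_
  have hw1 : ((w.1, 0) : L × L) ∈ I := (mem_evenPart hI).1 (h0 ▸ LieSubmodule.mem_top w.1)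
  have hw2 : ((0, w.2) : L × L) ∈ I := (mem_oddPart hI).1 (h1 ▸ LieSubmodule.mem_top w.2)
  simpa using I.add_mem hw1 hw2

theorem evenPart_eq_top_iff_oddPart_eq_top (hL : LieAlgebra.IsSimple R L) (hI : IsBracketClosed I) :
    evenPart hI = ⊤ ↔ oddPart hI = ⊤ :=
  ⟨fun h => hL.eq_top_of_forall_lie_mem fun x y =>
      lie_mem_oddPart hI x (h ▸ LieSubmodule.mem_top y),
    fun h => hL.eq_top_of_forall_lie_mem fun x y =>
      lie_mem_evenPart hI x (h ▸ LieSubmodule.mem_top y)⟩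

theorem eq_bot_or_eq_top (hL : LieAlgebra.IsSimple R L) (hI : IsBracketClosed I) (hhom : IsHomogeneous I) :
    I = ⊥ ∨ I = ⊤ := by
  refine or_iff_not_imp_left.2 fun hne => ?_
  have h0 : evenPart hI = ⊤ := by
    rcases evenPart_ne_bot_or_oddPart_ne_bot hI hhom hne with h | h
    · exact (hL.eq_bot_or_eq_top _).resolve_left h
    · exact (evenPart_eq_top_iff_oddPart_eq_top hL hI).2 ((hL.eq_bot_or_eq_top _).resolve_left h)
  exact eq_top_of_evenPart_eq_top_of_oddPart_eq_top hI h0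
    ((evenPart_eq_top_iff_oddPart_eq_top hL hI).1 h0)

end Queerification

theorem queerification_of_simple_is_simple_general (K : Type*) [Field K]
    (L : Type*) [LieRing L] [LieAlgebra K L]
    (hsimple : LieAlgebra.IsSimple K L)
    (sq : L → L) :
    ∀ I : Submodule K (L × L),
      (∀ z ∈ I, ((z.1, 0) : L × L) ∈ I ∧ ((0, z.2) : L × L) ∈ I) →
      (∀ z : L × L, ∀ w ∈ I,
        ((⁅z.1, w.1⁆ + ⁅z.2, w.2⁆, ⁅z.1, w.2⁆ + ⁅z.2, w.1⁆) : L × L) ∈ I) →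
      (∀ w ∈ I, ((sq w.2, 0) : L × L) ∈ I) →
      I = ⊥ ∨ I = ⊤ :=
  fun _ hhom hbr _ => Queerification.eq_bot_or_eq_top hsimple hbr hhom

/-- Over a field of characteristic 2, let `g` be a simple restricted Lie algebra with
2-operation `sq`.  Model the queerification `q(g) = g ⊕ Π(g)` on `g × g`
(first component even, second odd), with bracket
`[(x,y),(x',y')] = (⁅x,x'⁆ + ⁅y,y'⁆, ⁅x,y'⁆ + ⁅y,x'⁆)` and squaring
`(0,y)² = (sq y, 0)`.  Then `q(g)` is a simple Lie superalgebra: every homogeneous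
ideal (closed under brackets with arbitrary elements and under squaring of its odd
part) is `⊥` or everything. -/
theorem queerification_of_simple_is_simple (K : Type*) [Field K] [CharP K 2]
    (L : Type*) [LieRing L] [LieAlgebra K L]
    (hsimple : LieAlgebra.IsSimple K L)
    (sq : L → L)
    (hsq_ad : ∀ x y : L, ⁅sq x, y⁆ = ⁅x, ⁅x, y⁆⁆)
    (hsq_smul : ∀ (a : K) (x : L), sq (a • x) = (a * a) • sq x)
    (hsq_add : ∀ x y : L, sq (x + y) = sq x + sq y + ⁅x, y⁆) :
    ∀ I : Submodule K (L × L),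
      (∀ z ∈ I, ((z.1, 0) : L × L) ∈ I ∧ ((0, z.2) : L × L) ∈ I) →
      (∀ z : L × L, ∀ w ∈ I,
        ((⁅z.1, w.1⁆ + ⁅z.2, w.2⁆, ⁅z.1, w.2⁆ + ⁅z.2, w.1⁆) : L × L) ∈ I) →
      (∀ w ∈ I, ((sq w.2, 0) : L × L) ∈ I) →
      I = ⊥ ∨ I = ⊤ :=
  queerification_of_simple_is_simple_general K L hsimple sq
end

section
/- Let g be a simple Lie algebra over a field of characteristic 2, let ḡ be its restricted closure, and let g^{<1>} be the minimal subalgebra of ḡ containing g together with all elements x^{[2]} for x in g. Then the partial queerification q̃(g) := g^{<1>} ⊕ Π(g), with bracket [x, Π(y)] = Π([x,y]) for x in g^{<1>}, y in g, and squaring (Π(x))² := x^{[2]}, is a simple Lie superalgebra. -/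
/-!
The odd part `I₁` of a homogeneous ideal `I` is an ideal of the simple algebra `G`, so it is
`0` or `G`. If `I₁ = 0`, every even element `x ∈ I` has `⁅G, x⁆ ⊆ I₁ = 0`, so `x = 0` because `G`
has trivial centralizer. If `I₁ = G`, then `⁅G, G⁆ ⊆ I₀` and `sq G ⊆ I₀`; a simple Lie algebra
with trivial centralizer is perfect, so `G ⊆ I₀`, and the even part `I₀` is a subalgebra, hence
contains `G^{<1>}` by minimality.
-/

namespace PartialQueerification

variable {K L : Type*} [CommRing K] [LieRing L] [LieAlgebra K L]
  {G G1 : LieSubalgebra K L} {I : Submodule K (L × L)}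

theorem toSubmodule_le_of_lie_mem
    (hGsimple : ∀ J : Submodule K L, J ≤ G.toSubmodule →
      (∀ x ∈ G, ∀ y ∈ J, ⁅x, y⁆ ∈ J) → J = ⊥ ∨ J = G.toSubmodule)
    (hcent : ∀ z : L, (∀ x ∈ G, ⁅z, x⁆ = 0) → z = 0)
    {J : Submodule K L} (hJ : ∀ x ∈ G, ∀ y ∈ J, ⁅x, y⁆ ∈ J)
    (hGG : ∀ x ∈ G, ∀ y ∈ G, ⁅x, y⁆ ∈ J) : G.toSubmodule ≤ J := by
  have hJG : ∀ x ∈ G, ∀ y ∈ J ⊓ G.toSubmodule, ⁅x, y⁆ ∈ J ⊓ G.toSubmodule :=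
    fun x hx y ⟨hyJ, hyG⟩ ↦ ⟨hJ x hx y hyJ, G.lie_mem hx hyG⟩
  rcases hGsimple _ inf_le_right hJG with h | h
  · intro x hx
    have hx0 : x = 0 := hcent x fun y hy ↦ by
      have hxy : ⁅x, y⁆ ∈ J ⊓ G.toSubmodule := ⟨hGG x hx y hy, G.lie_mem hx hy⟩
      rwa [h, Submodule.mem_bot] at hxy
    simp [hx0]
  · exact h ▸ inf_le_left

def superLie (z w : L × L) : L × L :=
  (⁅z.1, w.1⁆ + ⁅z.2, w.2⁆, ⁅z.1, w.2⁆ + ⁅z.2, w.1⁆)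

def evenPart (I : Submodule K (L × L)) : Submodule K L := I.comap (LinearMap.inl K L L)

def oddPart (I : Submodule K (L × L)) : Submodule K L := I.comap (LinearMap.inr K L L)

@[simp]
theorem mem_evenPart {x : L} : x ∈ evenPart I ↔ ((x, 0) : L × L) ∈ I := Iff.rfl

@[simp]
theorem mem_oddPart {y : L} : y ∈ oddPart I ↔ ((0, y) : L × L) ∈ I := Iff.rfl

theorem eq_prod_evenPart_oddPart
    (hhom : ∀ z ∈ I, ((z.1, 0) : L × L) ∈ I ∧ ((0, z.2) : L × L) ∈ I) :
    I = (evenPart I).prod (oddPart I) := by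
  ext z
  refine ⟨fun hz ↦ hhom z hz, fun ⟨h1, h2⟩ ↦ ?_⟩
  simpa using I.add_mem h1 h2

theorem evenPart_le (hle : I ≤ G1.toSubmodule.prod G.toSubmodule) :
    evenPart I ≤ G1.toSubmodule :=
  fun _ hx ↦ (hle hx).1

theorem oddPart_le (hle : I ≤ G1.toSubmodule.prod G.toSubmodule) :
    oddPart I ≤ G.toSubmodule :=
  fun _ hy ↦ (hle hy).2

theorem lie_mem_evenPart
    (hbr : ∀ z ∈ G1.toSubmodule.prod G.toSubmodule, ∀ w ∈ I, superLie z w ∈ I)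
    {x y : L} (hx : x ∈ G1) (hy : y ∈ evenPart I) : ⁅x, y⁆ ∈ evenPart I := by
  simpa [superLie] using hbr (x, 0) ⟨hx, G.zero_mem⟩ _ hy

theorem lie_mem_oddPart
    (hbr : ∀ z ∈ G1.toSubmodule.prod G.toSubmodule, ∀ w ∈ I, superLie z w ∈ I)
    {x y : L} (hx : x ∈ G1) (hy : y ∈ oddPart I) : ⁅x, y⁆ ∈ oddPart I := by
  simpa [superLie] using hbr (x, 0) ⟨hx, G.zero_mem⟩ _ hy

theorem lie_oddPart_mem_evenPart
    (hbr : ∀ z ∈ G1.toSubmodule.prod G.toSubmodule, ∀ w ∈ I, superLie z w ∈ I)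
    {x y : L} (hx : x ∈ G) (hy : y ∈ oddPart I) : ⁅x, y⁆ ∈ evenPart I := by
  simpa [superLie] using hbr (0, x) ⟨G1.zero_mem, hx⟩ _ hy

theorem lie_evenPart_mem_oddPart
    (hbr : ∀ z ∈ G1.toSubmodule.prod G.toSubmodule, ∀ w ∈ I, superLie z w ∈ I)
    {x y : L} (hx : x ∈ G) (hy : y ∈ evenPart I) : ⁅x, y⁆ ∈ oddPart I := by
  simpa [superLie] using hbr (0, x) ⟨G1.zero_mem, hx⟩ _ hy

theorem evenPart_eq_bot_of_oddPart_eq_bot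
    (hcent : ∀ z : L, (∀ x ∈ G, ⁅z, x⁆ = 0) → z = 0)
    (hbr : ∀ z ∈ G1.toSubmodule.prod G.toSubmodule, ∀ w ∈ I, superLie z w ∈ I)
    (h : oddPart I = ⊥) : evenPart I = ⊥ := by
  refine (Submodule.eq_bot_iff _).mpr fun z hz ↦ hcent z fun x hx ↦ ?_
  have hxz : ⁅x, z⁆ ∈ oddPart I := lie_evenPart_mem_oddPart hbr hx hz
  rw [h, Submodule.mem_bot] at hxz
  rw [← lie_skew, hxz, neg_zero]

theorem evenPart_eq_of_oddPart_eq {sq : L → L}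
    (hGsimple : ∀ J : Submodule K L, J ≤ G.toSubmodule →
      (∀ x ∈ G, ∀ y ∈ J, ⁅x, y⁆ ∈ J) → J = ⊥ ∨ J = G.toSubmodule)
    (hcent : ∀ z : L, (∀ x ∈ G, ⁅z, x⁆ = 0) → z = 0)
    (hG1a : G ≤ G1)
    (hG1min : ∀ H : LieSubalgebra K L, G ≤ H → (∀ x ∈ G, sq x ∈ H) → G1 ≤ H)
    (hle : I ≤ G1.toSubmodule.prod G.toSubmodule)
    (hbr : ∀ z ∈ G1.toSubmodule.prod G.toSubmodule, ∀ w ∈ I, superLie z w ∈ I)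
    (hsqI : ∀ w ∈ I, ((sq w.2, 0) : L × L) ∈ I)
    (h : oddPart I = G.toSubmodule) : evenPart I = G1.toSubmodule := by
  have hG : G.toSubmodule ≤ evenPart I :=
    toSubmodule_le_of_lie_mem hGsimple hcent
      (fun x hx _ hy ↦ lie_mem_evenPart hbr (hG1a hx) hy)
      (fun _ hx y hy ↦ lie_oddPart_mem_evenPart hbr hx (h ▸ hy))
  let H : LieSubalgebra K L :=
    { evenPart I with lie_mem' := fun hx hy ↦ lie_mem_evenPart hbr (evenPart_le hle hx) hy }
  refine le_antisymm (evenPart_le hle) (hG1min H (fun _ hx ↦ hG hx) fun x hx ↦ ?_)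
  exact hsqI (0, x) (h ▸ hx : x ∈ oddPart I)

end PartialQueerification

open PartialQueerification in
/-- `q̃(G) = G^{<1>} ⊕ Π(G)` is modelled as the submodule `G1 × G` of `L × L`, even part first;
`I` ranges over its homogeneous ideals. -/
theorem partial_queerification_is_simple_general (K : Type*) [Field K]
    (L : Type*) [LieRing L] [LieAlgebra K L]
    (sq : L → L)
    (G : LieSubalgebra K L)
    (hGsimple : ∀ J : Submodule K L, J ≤ G.toSubmodule →
      (∀ x ∈ G, ∀ y ∈ J, ⁅x, y⁆ ∈ J) → J = ⊥ ∨ J = G.toSubmodule)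
    (hcent : ∀ z : L, (∀ x ∈ G, ⁅z, x⁆ = 0) → z = 0)
    (G1 : LieSubalgebra K L)
    (hG1a : G ≤ G1)
    (hG1min : ∀ H : LieSubalgebra K L, G ≤ H → (∀ x ∈ G, sq x ∈ H) → G1 ≤ H) :
    ∀ I : Submodule K (L × L),
      I ≤ (G1.toSubmodule).prod (G.toSubmodule) →
      (∀ z ∈ I, ((z.1, 0) : L × L) ∈ I ∧ ((0, z.2) : L × L) ∈ I) →
      (∀ z ∈ (G1.toSubmodule).prod (G.toSubmodule), ∀ w ∈ I,
        ((⁅(z : L × L).1, w.1⁆ + ⁅(z : L × L).2, w.2⁆,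
          ⁅(z : L × L).1, w.2⁆ + ⁅(z : L × L).2, w.1⁆) : L × L) ∈ I) →
      (∀ w ∈ I, ((sq w.2, 0) : L × L) ∈ I) →
      I = ⊥ ∨ I = (G1.toSubmodule).prod (G.toSubmodule) := by
  intro I hle hhom hbr hsqI
  rw [eq_prod_evenPart_oddPart hhom]
  have hodd := hGsimple (oddPart I) (oddPart_le hle)
    fun x hx _ hy ↦ lie_mem_oddPart hbr (hG1a hx) hy
  rcases hodd with h | h
  · left
    rw [h, evenPart_eq_bot_of_oddPart_eq_bot hcent hbr h, Submodule.prod_bot]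
  · right
    rw [h, evenPart_eq_of_oddPart_eq hGsimple hcent hG1a hG1min hle hbr hsqI h]

/-- Over a field of characteristic 2, let `L` be the restricted closure (with
2-operation `sq`) of a simple Lie algebra `G` sitting inside it as an ideal; by
minimality of the restricted closure, the centralizer of `G` in `L` vanishes.
Let `G1 = G^{<1>}` be the minimal subalgebra of `L` containing `G` and all
squares `sq x`, `x ∈ G`.  Model the partial queerification
`q̃(G) = G^{<1>} ⊕ Π(G)` on the submodule `Q = G1 × G` of `L × L`, with bracket
`[(x,y),(x',y')] = (⁅x,x'⁆ + ⁅y,y'⁆, ⁅x,y'⁆ + ⁅y,x'⁆)` and squaring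
`(0,y)² = (sq y, 0)`.  Then `q̃(G)` is a simple Lie superalgebra: every
homogeneous ideal of it is `⊥` or all of `Q`. -/
theorem partial_queerification_is_simple (K : Type*) [Field K] [CharP K 2]
    (L : Type*) [LieRing L] [LieAlgebra K L]
    (sq : L → L)
    (hsq_ad : ∀ x y : L, ⁅sq x, y⁆ = ⁅x, ⁅x, y⁆⁆)
    (hsq_smul : ∀ (a : K) (x : L), sq (a • x) = (a * a) • sq x)
    (hsq_add : ∀ x y : L, sq (x + y) = sq x + sq y + ⁅x, y⁆)
    (G : LieSubalgebra K L)
    (hGideal : ∀ z : L, ∀ x ∈ G, ⁅z, x⁆ ∈ G)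
    (hGsimple : ∀ J : Submodule K L, J ≤ G.toSubmodule →
      (∀ x ∈ G, ∀ y ∈ J, ⁅x, y⁆ ∈ J) → J = ⊥ ∨ J = G.toSubmodule)
    (hGnonab : ∃ x ∈ G, ∃ y ∈ G, ⁅x, y⁆ ≠ 0)
    (hcent : ∀ z : L, (∀ x ∈ G, ⁅z, x⁆ = 0) → z = 0)
    (G1 : LieSubalgebra K L)
    (hG1a : G ≤ G1)
    (hG1b : ∀ x ∈ G, sq x ∈ G1)
    (hG1min : ∀ H : LieSubalgebra K L, G ≤ H → (∀ x ∈ G, sq x ∈ H) → G1 ≤ H) :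
    ∀ I : Submodule K (L × L),
      I ≤ (G1.toSubmodule).prod (G.toSubmodule) →
      (∀ z ∈ I, ((z.1, 0) : L × L) ∈ I ∧ ((0, z.2) : L × L) ∈ I) →
      (∀ z ∈ (G1.toSubmodule).prod (G.toSubmodule), ∀ w ∈ I,
        ((⁅(z : L × L).1, w.1⁆ + ⁅(z : L × L).2, w.2⁆,
          ⁅(z : L × L).1, w.2⁆ + ⁅(z : L × L).2, w.1⁆) : L × L) ∈ I) →
      (∀ w ∈ I, ((sq w.2, 0) : L × L) ∈ I) →
      I = ⊥ ∨ I = (G1.toSubmodule).prod (G.toSubmodule) :=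
  partial_queerification_is_simple_general K L sq G hGsimple hcent G1 hG1a hG1min
end

section
/- Let g = g_+ ⊕ g_- be a Z/2-graded simple Lie algebra over a field of characteristic 2, let (g, gr) be the minimal subalgebra of the restricted closure of g containing g and all elements x^{[2]} with x in g_-, and let S(g, gr) be the Lie superalgebra on the space of (g, gr) with even part the +-part, odd part g_-, and squaring x² := x^{[2]} for x in g_-. Then S(g, gr) is a simple Lie superalgebra. -/
/-!
Collapse a homogeneous ideal `I ≤ Mp × Gm` of the superization to `J = I₀ ⊔ I₁ ≤ M` along
`(x, y) ↦ x + y`. The collapse turns the super bracket into the Lie bracket, so `J` is stable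
under `ad M` and `J ⊓ G` is an ideal of the simple algebra `G`. If `J ⊓ G = 0`, then
`⁅J, G⁆ ≤ J ⊓ G = 0`, and `J = 0` because `G` has trivial centralizer in `L`. Otherwise
`G ≤ J`, so `Gm ≤ I₁`; then `J` is a subalgebra containing `G` and the squares of `Gm`
(which lie in `I₀`), hence contains `M` by minimality, and `I = Mp × Gm`.
-/

theorem sup_inf_eq_left_of_inf_eq_bot {α : Type*} [Lattice α] [OrderBot α] [IsModularLattice α]
    {a b p n : α} (ha : a ≤ p) (hb : b ≤ n) (hpn : p ⊓ n = ⊥) : (a ⊔ b) ⊓ p = a := by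
  have hbp : b ⊓ p = ⊥ := eq_bot_iff.2 (hpn ▸ inf_comm p n ▸ inf_le_inf_right p hb)
  rw [sup_inf_assoc_of_le b ha, hbp, sup_bot_eq]

theorem eq_bot_of_lie_stable_of_inf_eq_bot {R L : Type*} [CommRing R] [LieRing L]
    [LieAlgebra R L] {G : LieSubalgebra R L} (hGideal : ∀ z : L, ∀ x ∈ G, ⁅z, x⁆ ∈ G)
    (hcent : ∀ z : L, (∀ x ∈ G, ⁅z, x⁆ = 0) → z = 0) {J : Submodule R L}
    (hJ : ∀ x ∈ G, ∀ y ∈ J, ⁅x, y⁆ ∈ J) (hJG : J ⊓ G.toSubmodule = ⊥) : J = ⊥ := by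
  refine eq_bot_iff.2 fun a ha => hcent a fun x hx => ?_
  have hax : ⁅a, x⁆ ∈ J ⊓ G.toSubmodule :=
    ⟨by rw [← lie_skew]; exact J.neg_mem (hJ x hx a ha), hGideal a x hx⟩
  rwa [hJG, Submodule.mem_bot] at hax

namespace Superization

variable {R L : Type*} [CommRing R] [LieRing L] [LieAlgebra R L]

def superLie (z w : L × L) : L × L :=
  (⁅z.1, w.1⁆ + ⁅z.2, w.2⁆, ⁅z.1, w.2⁆ + ⁅z.2, w.1⁆)

variable (R L) in
abbrev collapse : L × L →ₗ[R] L := LinearMap.coprod LinearMap.id LinearMap.id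

theorem collapse_superLie (z w : L × L) :
    collapse R L (superLie z w) = ⁅collapse R L z, collapse R L w⁆ := by
  simp only [collapse, superLie, LinearMap.coprod_apply, LinearMap.id_apply, lie_add, add_lie]
  abel

theorem lie_mem_map_collapse {P I : Submodule R (L × L)}
    (hI : ∀ z ∈ P, ∀ w ∈ I, superLie z w ∈ I) {x y : L}
    (hx : x ∈ P.map (collapse R L)) (hy : y ∈ I.map (collapse R L)) :
    ⁅x, y⁆ ∈ I.map (collapse R L) := by
  obtain ⟨z, hz, rfl⟩ := hx
  obtain ⟨w, hw, rfl⟩ := hy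
  rw [← collapse_superLie]
  exact Submodule.mem_map_of_mem (hI z hz w hw)

theorem map_collapse_prod (A B : Submodule R L) : (A.prod B).map (collapse R L) = A ⊔ B := by
  rw [LinearMap.map_coprod_prod, Submodule.map_id, Submodule.map_id]

abbrev evenPart (I : Submodule R (L × L)) : Submodule R L := I.comap (LinearMap.inl R L L)

abbrev oddPart (I : Submodule R (L × L)) : Submodule R L := I.comap (LinearMap.inr R L L)

def IsHomogeneous (I : Submodule R (L × L)) : Prop :=
  ∀ z ∈ I, ((z.1, 0) : L × L) ∈ I ∧ ((0, z.2) : L × L) ∈ I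

theorem IsHomogeneous.eq_prod {I : Submodule R (L × L)} (hI : IsHomogeneous I) :
    I = (evenPart I).prod (oddPart I) := by
  ext z
  refine ⟨fun hz => ⟨(hI z hz).1, (hI z hz).2⟩, fun hz => ?_⟩
  simpa using I.add_mem hz.1 hz.2

theorem IsHomogeneous.map_collapse {I : Submodule R (L × L)} (hI : IsHomogeneous I) :
    I.map (collapse R L) = evenPart I ⊔ oddPart I := by
  conv_lhs => rw [hI.eq_prod]
  exact map_collapse_prod _ _

section Parts

variable {E O : Submodule R L} {I : Submodule R (L × L)}

theorem evenPart_le (hIEO : I ≤ E.prod O) : evenPart I ≤ E :=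
  (Submodule.comap_mono hIEO).trans_eq (Submodule.prod_comap_inl _ _)

theorem oddPart_le (hIEO : I ≤ E.prod O) : oddPart I ≤ O :=
  (Submodule.comap_mono hIEO).trans_eq (Submodule.prod_comap_inr _ _)

theorem map_collapse_inf_left (hEO : E ⊓ O = ⊥) (hIEO : I ≤ E.prod O)
    (hI : IsHomogeneous I) : I.map (collapse R L) ⊓ E = evenPart I := by
  rw [hI.map_collapse]
  exact sup_inf_eq_left_of_inf_eq_bot (evenPart_le hIEO) (oddPart_le hIEO) hEO

theorem map_collapse_inf_right (hEO : E ⊓ O = ⊥) (hIEO : I ≤ E.prod O)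
    (hI : IsHomogeneous I) : I.map (collapse R L) ⊓ O = oddPart I := by
  rw [hI.map_collapse, sup_comm]
  exact sup_inf_eq_left_of_inf_eq_bot (oddPart_le hIEO) (evenPart_le hIEO) (inf_comm E O ▸ hEO)

end Parts

end Superization

open Superization

theorem method2_superization_is_simple_general (K : Type*) [Field K]
    (L : Type*) [LieRing L] [LieAlgebra K L]
    (sq : L → L)
    (G : LieSubalgebra K L)
    (hGideal : ∀ z : L, ∀ x ∈ G, ⁅z, x⁆ ∈ G)
    (hGsimple : ∀ J : Submodule K L, J ≤ G.toSubmodule →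
      (∀ x ∈ G, ∀ y ∈ J, ⁅x, y⁆ ∈ J) → J = ⊥ ∨ J = G.toSubmodule)
    (hcent : ∀ z : L, (∀ x ∈ G, ⁅z, x⁆ = 0) → z = 0)
    -- the ℤ/2-grading `G = Gp ⊕ Gm`
    (Gp Gm : Submodule K L)
    (hGdecomp : Gp ⊔ Gm = G.toSubmodule)
    -- `M = (G, gr)`: the minimal subalgebra containing `G` and `sq '' Gm`
    (M : LieSubalgebra K L)
    (hMa : G ≤ M)
    (hMmin : ∀ H : LieSubalgebra K L, G ≤ H → (∀ x ∈ Gm, sq x ∈ H) → M ≤ H)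
    -- the extension of the grading to `M = Mp ⊕ Gm`
    (Mp : Submodule K L)
    (hMdecomp : Mp ⊔ Gm = M.toSubmodule) (hMdisj : Mp ⊓ Gm = ⊥) :
    ∀ I : Submodule K (L × L),
      I ≤ Mp.prod Gm →
      (∀ z ∈ I, ((z.1, 0) : L × L) ∈ I ∧ ((0, z.2) : L × L) ∈ I) →
      (∀ z ∈ Mp.prod Gm, ∀ w ∈ I,
        ((⁅(z : L × L).1, w.1⁆ + ⁅(z : L × L).2, w.2⁆,
          ⁅(z : L × L).1, w.2⁆ + ⁅(z : L × L).2, w.1⁆) : L × L) ∈ I) →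
      (∀ w ∈ I, ((sq w.2, 0) : L × L) ∈ I) →
      I = ⊥ ∨ I = Mp.prod Gm := by
  intro I hIQ (hIhom : IsHomogeneous I) hIlie hIsq
  set J := I.map (collapse K L)
  have hJparts : J = evenPart I ⊔ oddPart I := hIhom.map_collapse
  have hMQ : M.toSubmodule = (Mp.prod Gm).map (collapse K L) := by
    rw [map_collapse_prod, hMdecomp]
  have hJM : J ≤ M.toSubmodule := hMQ ▸ Submodule.map_mono hIQ
  have hMJ : ∀ x ∈ M, ∀ y ∈ J, ⁅x, y⁆ ∈ J := fun x hx _ hy =>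
    lie_mem_map_collapse hIlie (hMQ ▸ hx) hy
  have hGJ_ideal : ∀ x ∈ G, ∀ y ∈ J ⊓ G.toSubmodule, ⁅x, y⁆ ∈ J ⊓ G.toSubmodule :=
    fun x hx y hy => ⟨hMJ x (hMa hx) y hy.1, hGideal x y hy.2⟩
  rcases hGsimple (J ⊓ G.toSubmodule) inf_le_right hGJ_ideal with hbot | htop
  · left
    have hJ := eq_bot_of_lie_stable_of_inf_eq_bot hGideal hcent (fun x hx => hMJ x (hMa hx)) hbot
    rw [hJparts, sup_eq_bot_iff] at hJ
    rw [hIhom.eq_prod, hJ.1, hJ.2, Submodule.prod_eq_bot_iff]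
    exact ⟨rfl, rfl⟩
  · right
    have hGJ : G.toSubmodule ≤ J := inf_eq_right.1 htop
    have hGmG : Gm ≤ G.toSubmodule := hGdecomp ▸ le_sup_right
    have hodd : oddPart I = Gm := le_antisymm (oddPart_le hIQ) <|
      map_collapse_inf_right hMdisj hIQ hIhom ▸ le_inf (hGmG.trans hGJ) le_rfl
    let JLie : LieSubalgebra K L := { J with lie_mem' := fun hx hy => hMJ _ (hJM hx) _ hy }
    have hsqJ : ∀ x ∈ Gm, sq x ∈ J := fun x hx =>
      hJparts ▸ Submodule.mem_sup_left (hIsq (0, x) (hodd.ge hx))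
    have hMJLie : M ≤ JLie := hMmin JLie hGJ hsqJ
    have hMpM : Mp ≤ M.toSubmodule := hMdecomp ▸ le_sup_left
    have heven : evenPart I = Mp := le_antisymm (evenPart_le hIQ) <|
      map_collapse_inf_left hMdisj hIQ hIhom ▸ le_inf (hMpM.trans hMJLie) le_rfl
    rw [hIhom.eq_prod, heven, hodd]

/-- Over a field of characteristic 2, let `L` be the restricted closure (with
2-operation `sq`) of a simple Lie algebra `G` sitting inside it as an ideal, the
centralizer of `G` in `L` being zero, and let `G = Gp ⊕ Gm` be a `ℤ/2`-grading of
`G`.  Let `M = (G, gr)` be the minimal subalgebra of `L` containing `G` together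
with all squares `sq x`, `x ∈ Gm`; the grading extends to `M = Mp ⊕ Gm`.
Model the Lie superalgebra `S(G, gr)` on the submodule `Q = Mp × Gm` of `L × L`
(even part `Mp`, odd part `Gm`) with bracket
`[(x,y),(x',y')] = (⁅x,x'⁆ + ⁅y,y'⁆, ⁅x,y'⁆ + ⁅y,x'⁆)` and squaring
`(0,y)² = (sq y, 0)`.  Then `S(G, gr)` is a simple Lie superalgebra. -/
theorem method2_superization_is_simple (K : Type*) [Field K] [CharP K 2]
    (L : Type*) [LieRing L] [LieAlgebra K L]
    (sq : L → L)
    (hsq_ad : ∀ x y : L, ⁅sq x, y⁆ = ⁅x, ⁅x, y⁆⁆)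
    (hsq_smul : ∀ (a : K) (x : L), sq (a • x) = (a * a) • sq x)
    (hsq_add : ∀ x y : L, sq (x + y) = sq x + sq y + ⁅x, y⁆)
    (G : LieSubalgebra K L)
    (hGideal : ∀ z : L, ∀ x ∈ G, ⁅z, x⁆ ∈ G)
    (hGsimple : ∀ J : Submodule K L, J ≤ G.toSubmodule →
      (∀ x ∈ G, ∀ y ∈ J, ⁅x, y⁆ ∈ J) → J = ⊥ ∨ J = G.toSubmodule)
    (hGnonab : ∃ x ∈ G, ∃ y ∈ G, ⁅x, y⁆ ≠ 0)
    (hcent : ∀ z : L, (∀ x ∈ G, ⁅z, x⁆ = 0) → z = 0)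
    -- the ℤ/2-grading `G = Gp ⊕ Gm`
    (Gp Gm : Submodule K L)
    (hGdecomp : Gp ⊔ Gm = G.toSubmodule) (hGdisj : Gp ⊓ Gm = ⊥)
    (hgr_pp : ∀ x ∈ Gp, ∀ y ∈ Gp, ⁅x, y⁆ ∈ Gp)
    (hgr_pm : ∀ x ∈ Gp, ∀ y ∈ Gm, ⁅x, y⁆ ∈ Gm)
    (hgr_mm : ∀ x ∈ Gm, ∀ y ∈ Gm, ⁅x, y⁆ ∈ Gp)
    -- `M = (G, gr)`: the minimal subalgebra containing `G` and `sq '' Gm`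
    (M : LieSubalgebra K L)
    (hMa : G ≤ M) (hMb : ∀ x ∈ Gm, sq x ∈ M)
    (hMmin : ∀ H : LieSubalgebra K L, G ≤ H → (∀ x ∈ Gm, sq x ∈ H) → M ≤ H)
    -- the extension of the grading to `M = Mp ⊕ Gm`
    (Mp : Submodule K L)
    (hMpGp : Gp ≤ Mp) (hMpsq : ∀ x ∈ Gm, sq x ∈ Mp)
    (hMdecomp : Mp ⊔ Gm = M.toSubmodule) (hMdisj : Mp ⊓ Gm = ⊥)
    (hMgr_pp : ∀ x ∈ Mp, ∀ y ∈ Mp, ⁅x, y⁆ ∈ Mp)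
    (hMgr_pm : ∀ x ∈ Mp, ∀ y ∈ Gm, ⁅x, y⁆ ∈ Gm) :
    ∀ I : Submodule K (L × L),
      I ≤ Mp.prod Gm →
      (∀ z ∈ I, ((z.1, 0) : L × L) ∈ I ∧ ((0, z.2) : L × L) ∈ I) →
      (∀ z ∈ Mp.prod Gm, ∀ w ∈ I,
        ((⁅(z : L × L).1, w.1⁆ + ⁅(z : L × L).2, w.2⁆,
          ⁅(z : L × L).1, w.2⁆ + ⁅(z : L × L).2, w.1⁆) : L × L) ∈ I) →
      (∀ w ∈ I, ((sq w.2, 0) : L × L) ∈ I) →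
      I = ⊥ ∨ I = Mp.prod Gm :=
  method2_superization_is_simple_general K L sq G hGideal hGsimple hcent Gp Gm hGdecomp M hMa hMmin
    Mp hMdecomp hMdisj
end

section
/- Let g be a simple Lie superalgebra over a field of characteristic 2 and let F(g) be the underlying Lie algebra (forgetting the squaring, with [x,x] = 0 for odd x). Then h := [g_odd, g_odd] ⊕ g_odd is an ideal of F(g), and h has no nonzero proper ideals that are graded with respect to the Z/2-grading inherited from the superalgebra parity. -/
/-!
Adjoining to a graded ideal `J` of `F(g)` the span of the squares of its odd elements yields a
graded ideal of `F(g)` closed under squaring: it is an ideal because `ad (sq x) = (ad x)²`, and its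
odd part is still `J ∩ g_odd` because squares are even. Simplicity of `g` therefore leaves only
`J = 0` or `g_odd ⊆ J`. Applied to `h ≠ 0`, this gives `h + span (sq g_odd) = g`, so every ideal
of `h` is, once more by `ad (sq x) = (ad x)²`, an ideal of `F(g)`; applied to a graded ideal `J`
of `h`, it gives `J = 0` or `J ⊇ g_odd + [g_odd, g_odd] = h`.
-/

namespace Submodule

section Grading

variable {R M : Type*} [Ring R] [AddCommGroup M] [Module R M]

def IsGradedBy (J A B : Submodule R M) : Prop :=
  J = J ⊓ A ⊔ J ⊓ B

variable {A A' B J W : Submodule R M}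

theorem isGradedBy_iff_le : J.IsGradedBy A B ↔ J ≤ J ⊓ A ⊔ J ⊓ B :=
  ⟨le_of_eq, fun h => le_antisymm h (sup_le inf_le_left inf_le_left)⟩

theorem IsGradedBy.mono_left (hJ : J.IsGradedBy A B) (hA : A ≤ A') : J.IsGradedBy A' B :=
  isGradedBy_iff_le.2 <| hJ.le.trans (sup_le_sup_right (inf_le_inf_left J hA) _)

theorem IsGradedBy.sup_of_le_left (hJ : J.IsGradedBy A B) (hW : W ≤ A) :
    (J ⊔ W).IsGradedBy A B := by
  refine isGradedBy_iff_le.2 (sup_le ?_ (le_sup_of_le_left (le_inf le_sup_right hW)))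
  exact hJ.le.trans (sup_le_sup (inf_le_inf_right _ le_sup_left) (inf_le_inf_right _ le_sup_left))

theorem IsGradedBy.sup_inf_le (hJ : J.IsGradedBy A B) (hW : W ≤ A) (hAB : A ⊓ B = ⊥) :
    (J ⊔ W) ⊓ B ≤ J := by
  rintro x ⟨hx, hxB⟩
  obtain ⟨j, hj, u, hu, rfl⟩ := mem_sup.1 hx
  rw [hJ] at hj
  obtain ⟨a, ha, b, hb, rfl⟩ := mem_sup.1 hj
  have hau : a + u ∈ A ⊓ B :=
    ⟨add_mem ha.2 (hW hu), by simpa [add_right_comm] using sub_mem hxB hb.2⟩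
  rw [hAB, mem_bot] at hau
  rw [add_right_comm, hau, zero_add]
  exact hb.1

end Grading

section Lie

variable {R V : Type*} [CommRing R] [LieRing V] [LieAlgebra R V]

def lieNormalizer (J : Submodule R V) : Submodule R V where
  carrier := {z | ∀ w ∈ J, ⁅z, w⁆ ∈ J}
  add_mem' hz hz' w hw := by rw [add_lie]; exact add_mem (hz w hw) (hz' w hw)
  zero_mem' w _ := by rw [zero_lie]; exact zero_mem J
  smul_mem' c z hz w hw := by rw [smul_lie]; exact smul_mem J c (hz w hw)

variable {J : Submodule R V}

theorem mem_lieNormalizer_iff_le_comap {z : V} :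
    z ∈ J.lieNormalizer ↔ J ≤ J.comap (LieAlgebra.ad R V z) :=
  Iff.rfl

theorem top_le_lieNormalizer_iff : ⊤ ≤ J.lieNormalizer ↔ ∀ z : V, ∀ w ∈ J, ⁅z, w⁆ ∈ J :=
  ⟨fun h _ => h mem_top, fun h _ _ => h _⟩

theorem lie_mem_comm {x y : V} : ⁅x, y⁆ ∈ J ↔ ⁅y, x⁆ ∈ J := by
  rw [← lie_skew, neg_mem_iff]

def bracketSpan (B : Submodule R V) : Submodule R V :=
  span R {z | ∃ x ∈ B, ∃ y ∈ B, z = ⁅x, y⁆}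

def squareSpan (sq : V → V) (A : Submodule R V) : Submodule R V :=
  span R {u | ∃ x ∈ A, u = sq x}

theorem bracketSpan_le {A B : Submodule R V} (h : ∀ x ∈ B, ∀ y ∈ B, ⁅x, y⁆ ∈ A) :
    bracketSpan B ≤ A :=
  span_le.2 <| by rintro _ ⟨x, hx, y, hy, rfl⟩; exact h x hx y hy

theorem squareSpan_le {sq : V → V} {A B : Submodule R V} (h : ∀ x ∈ A, sq x ∈ B) :
    squareSpan sq A ≤ B :=
  span_le.2 <| by rintro _ ⟨x, hx, rfl⟩; exact h x hx

theorem top_le_lieNormalizer_bracketSpan_sup {Ve Vo : Submodule R V} (hdecomp : Ve ⊔ Vo = ⊤)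
    (hgr_eo : ∀ x ∈ Ve, ∀ y ∈ Vo, ⁅x, y⁆ ∈ Vo) (hgr_oo : ∀ x ∈ Vo, ∀ y ∈ Vo, ⁅x, y⁆ ∈ Ve) :
    ⊤ ≤ (bracketSpan Vo ⊔ Vo).lieNormalizer := by
  rw [← hdecomp]
  refine sup_le (fun e he => mem_lieNormalizer_iff_le_comap.2 ?_)
    (fun o ho => mem_lieNormalizer_iff_le_comap.2 ?_)
  · refine sup_le (bracketSpan_le fun x hx y hy => ?_) fun y hy => mem_sup_right (hgr_eo e he y hy)
    rw [mem_comap, LieAlgebra.ad_apply, leibniz_lie]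
    exact mem_sup_left (add_mem (subset_span ⟨_, hgr_eo e he x hx, y, hy, rfl⟩)
      (subset_span ⟨x, hx, _, hgr_eo e he y hy, rfl⟩))
  · refine sup_le (fun s hs => ?_) fun y hy => mem_sup_left (subset_span ⟨o, ho, y, hy, rfl⟩)
    exact mem_sup_right (lie_mem_comm.1 (hgr_eo s (bracketSpan_le hgr_oo hs) o ho))

variable {sq : V → V} {A : Submodule R V}

theorem squareSpan_le_lieNormalizer (hsq_ad : ∀ x ∈ A, ∀ y : V, ⁅sq x, y⁆ = ⁅x, ⁅x, y⁆⁆)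
    (hA : A ≤ J.lieNormalizer) : squareSpan sq A ≤ J.lieNormalizer :=
  squareSpan_le fun x hx w hw => by rw [hsq_ad x hx]; exact hA hx _ (hA hx w hw)

theorem top_le_lieNormalizer_sup_squareSpan (hsq_ad : ∀ x ∈ A, ∀ y : V, ⁅sq x, y⁆ = ⁅x, ⁅x, y⁆⁆)
    (hA : A ≤ J) (hJ : ⊤ ≤ J.lieNormalizer) : ⊤ ≤ (J ⊔ squareSpan sq A).lieNormalizer := by
  intro z _
  have hle : J ⊔ squareSpan sq A ≤ J.comap (LieAlgebra.ad R V z) := by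
    refine sup_le (mem_lieNormalizer_iff_le_comap.1 (hJ mem_top)) (squareSpan_le fun x hx => ?_)
    rw [mem_comap, LieAlgebra.ad_apply, lie_mem_comm, hsq_ad x hx]
    exact hJ mem_top _ (lie_mem_comm.1 (hJ mem_top x (hA hx)))
  exact fun w hw => mem_sup_left (hle hw)

end Lie

end Submodule

open Submodule

section SimpleLieSuperalgebra

variable {R V : Type*} [CommRing R] [LieRing V] [LieAlgebra R V] {Ve Vo J : Submodule R V}
  {sq : V → V}

theorem sup_squareSpan_eq_bot_or_eq_top (hdisj : Ve ⊓ Vo = ⊥)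
    (hsq_even : ∀ x ∈ Vo, sq x ∈ Ve) (hsq_ad : ∀ x ∈ Vo, ∀ y : V, ⁅sq x, y⁆ = ⁅x, ⁅x, y⁆⁆)
    (hsimple : ∀ I : Submodule R V, I.IsGradedBy Ve Vo → (∀ z : V, ∀ w ∈ I, ⁅z, w⁆ ∈ I) →
      (∀ x ∈ I ⊓ Vo, sq x ∈ I) → I = ⊥ ∨ I = ⊤)
    (hJgr : J.IsGradedBy Ve Vo) (hJ : ⊤ ≤ J.lieNormalizer) :
    J ⊔ squareSpan sq (J ⊓ Vo) = ⊥ ∨ J ⊔ squareSpan sq (J ⊓ Vo) = ⊤ := by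
  have hW : squareSpan sq (J ⊓ Vo) ≤ Ve := squareSpan_le fun x hx => hsq_even x hx.2
  refine hsimple _ (hJgr.sup_of_le_left hW) (top_le_lieNormalizer_iff.1
    (top_le_lieNormalizer_sup_squareSpan (fun x hx => hsq_ad x hx.2) inf_le_left hJ)) ?_
  exact fun x hx => mem_sup_right (subset_span ⟨x, ⟨hJgr.sup_inf_le hW hdisj hx, hx.2⟩, rfl⟩)

theorem le_of_sup_squareSpan_eq_top (hdisj : Ve ⊓ Vo = ⊥) (hsq_even : ∀ x ∈ Vo, sq x ∈ Ve)
    (hJgr : J.IsGradedBy Ve Vo) (htop : J ⊔ squareSpan sq (J ⊓ Vo) = ⊤) : Vo ≤ J := by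
  have hW : squareSpan sq (J ⊓ Vo) ≤ Ve := squareSpan_le fun x hx => hsq_even x hx.2
  exact fun x hx => hJgr.sup_inf_le hW hdisj ⟨htop ▸ mem_top, hx⟩

end SimpleLieSuperalgebra

theorem h_ideal_no_graded_ideals_general (K : Type*) [Field K]
    (V : Type*) [LieRing V] [LieAlgebra K V]
    (Ve Vo : Submodule K V)
    (hdecomp : Ve ⊔ Vo = ⊤) (hdisj : Ve ⊓ Vo = ⊥)
    (hgr_eo : ∀ x ∈ Ve, ∀ y ∈ Vo, ⁅x, y⁆ ∈ Vo)
    (hgr_oo : ∀ x ∈ Vo, ∀ y ∈ Vo, ⁅x, y⁆ ∈ Ve)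
    (sq : V → V)
    (hsq_even : ∀ x ∈ Vo, sq x ∈ Ve)
    (hsq_ad : ∀ x ∈ Vo, ∀ y : V, ⁅sq x, y⁆ = ⁅x, ⁅x, y⁆⁆)
    (hsimple : ∀ I : Submodule K V,
      I = (I ⊓ Ve) ⊔ (I ⊓ Vo) →
      (∀ z : V, ∀ w ∈ I, ⁅z, w⁆ ∈ I) →
      (∀ x ∈ I ⊓ Vo, sq x ∈ I) →
      I = ⊥ ∨ I = ⊤) :
    (∀ z : V, ∀ w ∈ Submodule.span K {z : V | ∃ x ∈ Vo, ∃ y ∈ Vo, z = ⁅x, y⁆} ⊔ Vo,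
      ⁅z, w⁆ ∈ Submodule.span K {z : V | ∃ x ∈ Vo, ∃ y ∈ Vo, z = ⁅x, y⁆} ⊔ Vo) ∧
    (∀ J : Submodule K V,
      J ≤ Submodule.span K {z : V | ∃ x ∈ Vo, ∃ y ∈ Vo, z = ⁅x, y⁆} ⊔ Vo →
      (J = (J ⊓ Submodule.span K {z : V | ∃ x ∈ Vo, ∃ y ∈ Vo, z = ⁅x, y⁆}) ⊔ (J ⊓ Vo)) →
      (∀ z ∈ Submodule.span K {z : V | ∃ x ∈ Vo, ∃ y ∈ Vo, z = ⁅x, y⁆} ⊔ Vo,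
        ∀ w ∈ J, ⁅z, w⁆ ∈ J) →
      J = ⊥ ∨ J = Submodule.span K {z : V | ∃ x ∈ Vo, ∃ y ∈ Vo, z = ⁅x, y⁆} ⊔ Vo) := by
  have hS : bracketSpan Vo ≤ Ve := bracketSpan_le hgr_oo
  have hh : ⊤ ≤ (bracketSpan Vo ⊔ Vo).lieNormalizer :=
    top_le_lieNormalizer_bracketSpan_sup hdecomp hgr_eo hgr_oo
  refine ⟨top_le_lieNormalizer_iff.1 hh, fun J hJh hJgr hJideal => ?_⟩
  have hhgr : (bracketSpan Vo ⊔ Vo).IsGradedBy Ve Vo :=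
    isGradedBy_iff_le.2 (sup_le_sup (le_inf le_sup_left hS) (le_inf le_sup_right le_rfl))
  rcases sup_squareSpan_eq_bot_or_eq_top hdisj hsq_even hsq_ad hsimple hhgr hh with hbot | hgen
  · exact Or.inl (eq_bot_iff.2 (hJh.trans (le_sup_left.trans hbot.le)))
  have hJ : ⊤ ≤ J.lieNormalizer := hgen ▸ sup_le hJideal
    (squareSpan_le_lieNormalizer (fun x hx => hsq_ad x hx.2) (inf_le_left.trans hJideal))
  have hJgr' : J.IsGradedBy Ve Vo := (show J.IsGradedBy (bracketSpan Vo) Vo from hJgr).mono_left hS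
  rcases sup_squareSpan_eq_bot_or_eq_top hdisj hsq_even hsq_ad hsimple hJgr' hJ with hbot | hJtop
  · exact Or.inl (eq_bot_iff.2 (le_sup_left.trans hbot.le))
  have hVo : Vo ≤ J := le_of_sup_squareSpan_eq_top hdisj hsq_even hJgr' hJtop
  exact Or.inr (le_antisymm hJh
    (sup_le (bracketSpan_le fun x _ y hy => top_le_lieNormalizer_iff.1 hJ x y (hVo hy)) hVo))

/-- Over a field of characteristic 2, let `g` be a simple Lie superalgebra, modelled
as a Lie algebra `V` (the desuperization `F(g)`) with `ℤ/2`-grading `V = Ve ⊕ Vo`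
and squaring `sq` on the odd part, simplicity being stated as absence of nonzero
proper homogeneous ideals closed under squaring of odd elements.  Then
`h := [Vo, Vo] ⊕ Vo` is an ideal of `F(g)`, and `h` has no nonzero proper ideals
graded with respect to the inherited `ℤ/2`-grading. -/
theorem h_ideal_no_graded_ideals (K : Type*) [Field K] [CharP K 2]
    (V : Type*) [LieRing V] [LieAlgebra K V]
    (Ve Vo : Submodule K V)
    (hdecomp : Ve ⊔ Vo = ⊤) (hdisj : Ve ⊓ Vo = ⊥)
    (hgr_ee : ∀ x ∈ Ve, ∀ y ∈ Ve, ⁅x, y⁆ ∈ Ve)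
    (hgr_eo : ∀ x ∈ Ve, ∀ y ∈ Vo, ⁅x, y⁆ ∈ Vo)
    (hgr_oo : ∀ x ∈ Vo, ∀ y ∈ Vo, ⁅x, y⁆ ∈ Ve)
    (sq : V → V)
    (hsq_even : ∀ x ∈ Vo, sq x ∈ Ve)
    (hsq_ad : ∀ x ∈ Vo, ∀ y : V, ⁅sq x, y⁆ = ⁅x, ⁅x, y⁆⁆)
    (hsq_pol : ∀ x ∈ Vo, ∀ y ∈ Vo, sq (x + y) = sq x + sq y + ⁅x, y⁆)
    (hsq_smul : ∀ (a : K), ∀ x ∈ Vo, sq (a • x) = (a * a) • sq x)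
    (hsimple : ∀ I : Submodule K V,
      I = (I ⊓ Ve) ⊔ (I ⊓ Vo) →
      (∀ z : V, ∀ w ∈ I, ⁅z, w⁆ ∈ I) →
      (∀ x ∈ I ⊓ Vo, sq x ∈ I) →
      I = ⊥ ∨ I = ⊤)
    (hnonab : ∃ x y : V, ⁅x, y⁆ ≠ 0) :
    (∀ z : V, ∀ w ∈ Submodule.span K {z : V | ∃ x ∈ Vo, ∃ y ∈ Vo, z = ⁅x, y⁆} ⊔ Vo,
      ⁅z, w⁆ ∈ Submodule.span K {z : V | ∃ x ∈ Vo, ∃ y ∈ Vo, z = ⁅x, y⁆} ⊔ Vo) ∧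
    (∀ J : Submodule K V,
      J ≤ Submodule.span K {z : V | ∃ x ∈ Vo, ∃ y ∈ Vo, z = ⁅x, y⁆} ⊔ Vo →
      (J = (J ⊓ Submodule.span K {z : V | ∃ x ∈ Vo, ∃ y ∈ Vo, z = ⁅x, y⁆}) ⊔ (J ⊓ Vo)) →
      (∀ z ∈ Submodule.span K {z : V | ∃ x ∈ Vo, ∃ y ∈ Vo, z = ⁅x, y⁆} ⊔ Vo,
        ∀ w ∈ J, ⁅z, w⁆ ∈ J) →
      J = ⊥ ∨ J = Submodule.span K {z : V | ∃ x ∈ Vo, ∃ y ∈ Vo, z = ⁅x, y⁆} ⊔ Vo) :=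
  h_ideal_no_graded_ideals_general K V Ve Vo hdecomp hdisj hgr_eo hgr_oo sq hsq_even hsq_ad hsimple
end

section
/- Let h = h_even ⊕ h_odd be a Z/2-graded Lie algebra (not superalgebra) over a field of characteristic 2 which has no nonzero proper graded ideals, and suppose i is a nonzero proper (not necessarily graded) ideal of h. Then there exists a linear bijection f : h_even → h_odd such that i = { x + f(x) : x ∈ h_even }, and f satisfies [y, f(x)] = f([y,x]) and [f(y), f(x)] = [y, x] for all x, y ∈ h_even. -/
/-!
The graded core `(i ∩ h_even) + (i ∩ h_odd)` and the graded hull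
`((i + h_odd) ∩ h_even) + ((i + h_even) ∩ h_odd)` of an ideal `i` are graded ideals with
core ≤ i ≤ hull, so the absence of proper graded ideals forces core = 0 and hull = h.
Hence `i` is a common complement of `h_even` and `h_odd`, i.e. the graph over `h_even` of
`f = -(projection onto h_odd along i)`. Bracketing with even elements preserves both `i` and the
grading, which gives `[y, f x] = f [y, x]`. In `[y + f y, x + f x] ∈ i` the odd part is then
`2 f [y, x] = 0`, so the even part `[y, x] + [f y, f x]` lies in `i ∩ h_even = 0`.
-/

open Submodule

theorem eq_of_le_of_le_of_disjoint_of_sup_eq_top {α : Type*} [Lattice α] [BoundedOrder α]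
    [IsModularLattice α] {a b c d : α} (hac : a ≤ c) (hbd : b ≤ d) (hcd : Disjoint c d)
    (hab : a ⊔ b = ⊤) : a = c := by
  have hbc : b ⊓ c = ⊥ := (hcd.symm.mono_left hbd).eq_bot
  calc a = a ⊔ b ⊓ c := by rw [hbc, sup_bot_eq]
    _ = (a ⊔ b) ⊓ c := (sup_inf_assoc_of_le b hac).symm
    _ = c := by rw [hab, top_inf_eq]

section Module

variable {R M : Type*} [Ring R] [AddCommGroup M] [Module R M]

theorem Submodule.le_sup_inf_sup_inf {I P Q : Submodule R M} (hPQ : P ⊔ Q = ⊤) :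
    I ≤ (I ⊔ Q) ⊓ P ⊔ (I ⊔ P) ⊓ Q := by
  intro x hx
  obtain ⟨p, hp, q, hq, rfl⟩ := mem_sup.mp (hPQ ▸ mem_top : x ∈ P ⊔ Q)
  have hpI : p ∈ I ⊔ Q := by
    simpa using sub_mem (mem_sup_left hx) (mem_sup_right hq : q ∈ I ⊔ Q)
  have hqI : q ∈ I ⊔ P := by
    simpa using sub_mem (mem_sup_left hx) (mem_sup_right hp : p ∈ I ⊔ P)
  exact add_mem (mem_sup_left ⟨hpI, hp⟩) (mem_sup_right ⟨hqI, hq⟩)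

noncomputable def graphMap {i Ho : Submodule R M} (h : IsCompl i Ho) : M →ₗ[R] M :=
  -Ho.projection i h.symm

variable {i He Ho : Submodule R M} (h : IsCompl i Ho)
include h

theorem graphMap_mem (x : M) : graphMap h x ∈ Ho :=
  neg_mem (projection_apply_mem _ x)

theorem add_graphMap_mem (x : M) : x + graphMap h x ∈ i := by
  rw [graphMap, LinearMap.neg_apply, ← sub_eq_add_neg, ← projection_eq_self_sub_projection]
  exact projection_apply_mem h x

theorem graphMap_eq_of_add_mem {x u : M} (hu : u ∈ Ho) (hxu : x + u ∈ i) :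
    graphMap h x = u := by
  have hmem : u - graphMap h x ∈ i ⊓ Ho :=
    ⟨by simpa using sub_mem hxu (add_graphMap_mem h x), sub_mem hu (graphMap_mem h x)⟩
  rw [h.inf_eq_bot, mem_bot, sub_eq_zero] at hmem
  exact hmem.symm

theorem mem_iff_exists_eq_add_graphMap (hspan : He ⊔ Ho = ⊤) {z : M} :
    z ∈ i ↔ ∃ x ∈ He, z = x + graphMap h x := by
  constructor
  · intro hz
    obtain ⟨x, hx, u, hu, rfl⟩ := mem_sup.mp (hspan ▸ mem_top : z ∈ He ⊔ Ho)
    exact ⟨x, hx, by rw [graphMap_eq_of_add_mem h hu hz]⟩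
  · rintro ⟨x, -, rfl⟩
    exact add_graphMap_mem h x

theorem graphMap_injOn (hbot : i ⊓ He = ⊥) : Set.InjOn (graphMap h) He := by
  intro x hx y hy hxy
  have hmem : x - y ∈ i ⊓ He := by
    refine ⟨?_, sub_mem hx hy⟩
    simpa [hxy] using sub_mem (add_graphMap_mem h x) (add_graphMap_mem h y)
  rwa [hbot, mem_bot, sub_eq_zero] at hmem

theorem graphMap_surjOn (hcod : i ⊔ He = ⊤) : Set.SurjOn (graphMap h) He Ho := by
  intro w hw
  obtain ⟨z, hz, x, hx, rfl⟩ := mem_sup.mp (hcod ▸ mem_top : w ∈ i ⊔ He)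
  exact ⟨-x, neg_mem hx, graphMap_eq_of_add_mem h hw (by simpa using hz)⟩

end Module

section Lie

variable {K H : Type*} [CommRing K] [LieRing H] [LieAlgebra K H]

def IsLieIdeal (J : Submodule K H) : Prop :=
  ∀ z : H, ∀ w ∈ J, ⁅z, w⁆ ∈ J

def IsGraded (He Ho J : Submodule K H) : Prop :=
  J = J ⊓ He ⊔ J ⊓ Ho

structure IsZ2Grading (He Ho : Submodule K H) : Prop where
  isCompl : IsCompl He Ho
  lie_even_even : ∀ x ∈ He, ∀ y ∈ He, ⁅x, y⁆ ∈ He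
  lie_even_odd : ∀ x ∈ He, ∀ y ∈ Ho, ⁅x, y⁆ ∈ Ho
  lie_odd_odd : ∀ x ∈ Ho, ∀ y ∈ Ho, ⁅x, y⁆ ∈ He

theorem isGraded_sup {He Ho A B : Submodule K H} (hA : A ≤ He) (hB : B ≤ Ho) :
    IsGraded He Ho (A ⊔ B) :=
  le_antisymm (sup_le_sup (le_inf le_sup_left hA) (le_inf le_sup_right hB))
    (sup_le inf_le_left inf_le_left)

theorem isLieIdeal_sup {He Ho A B : Submodule K H} (hspan : He ⊔ Ho = ⊤)
    (hAe : ∀ a ∈ He, ∀ x ∈ A, ⁅a, x⁆ ∈ A) (hAo : ∀ b ∈ Ho, ∀ x ∈ A, ⁅b, x⁆ ∈ B)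
    (hBe : ∀ a ∈ He, ∀ y ∈ B, ⁅a, y⁆ ∈ B) (hBo : ∀ b ∈ Ho, ∀ y ∈ B, ⁅b, y⁆ ∈ A) :
    IsLieIdeal (A ⊔ B) := by
  intro z w hw
  obtain ⟨a, ha, b, hb, rfl⟩ := mem_sup.mp (hspan ▸ mem_top : z ∈ He ⊔ Ho)
  obtain ⟨x, hx, y, hy, rfl⟩ := mem_sup.mp hw
  rw [add_lie, lie_add, lie_add]
  exact add_mem (add_mem (mem_sup_left (hAe a ha x hx)) (mem_sup_right (hBe a ha y hy)))
    (add_mem (mem_sup_right (hAo b hb x hx)) (mem_sup_left (hBo b hb y hy)))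

theorem lie_mem_sup_inf {I P Q P' Q' : Submodule K H} (hI : IsLieIdeal I) {c : H}
    (hP : ∀ p ∈ P, ⁅c, p⁆ ∈ P') (hQ : ∀ q ∈ Q, ⁅c, q⁆ ∈ Q') {x : H} (hx : x ∈ (I ⊔ P) ⊓ Q) :
    ⁅c, x⁆ ∈ (I ⊔ P') ⊓ Q' := by
  refine ⟨?_, hQ x hx.2⟩
  obtain ⟨w, hw, p, hp, rfl⟩ := mem_sup.mp hx.1
  rw [lie_add]
  exact add_mem (mem_sup_left (hI c w hw)) (mem_sup_right (hP p hp))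

theorem lie_graphMap {i Ho : Submodule K H} (h : IsCompl i Ho) (hi : IsLieIdeal i) {y : H}
    (hy : ∀ u ∈ Ho, ⁅y, u⁆ ∈ Ho) (x : H) : ⁅y, graphMap h x⁆ = graphMap h ⁅y, x⁆ :=
  (graphMap_eq_of_add_mem h (hy _ (graphMap_mem h x))
    (by rw [← lie_add]; exact hi y _ (add_graphMap_mem h x))).symm

namespace IsZ2Grading

variable {He Ho : Submodule K H} (hg : IsZ2Grading He Ho)
include hg

theorem lie_odd_even : ∀ x ∈ Ho, ∀ y ∈ He, ⁅x, y⁆ ∈ Ho := fun x hx y hy => by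
  rw [← lie_skew]
  exact neg_mem (hg.lie_even_odd y hy x hx)

theorem isLieIdeal_inf_sup_inf {i : Submodule K H} (hi : IsLieIdeal i) :
    IsLieIdeal (i ⊓ He ⊔ i ⊓ Ho) :=
  isLieIdeal_sup hg.isCompl.sup_eq_top
    (fun a ha x hx => ⟨hi a x hx.1, hg.lie_even_even a ha x hx.2⟩)
    (fun b hb x hx => ⟨hi b x hx.1, hg.lie_odd_even b hb x hx.2⟩)
    (fun a ha y hy => ⟨hi a y hy.1, hg.lie_even_odd a ha y hy.2⟩)
    (fun b hb y hy => ⟨hi b y hy.1, hg.lie_odd_odd b hb y hy.2⟩)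

theorem isLieIdeal_sup_inf_sup_inf {i : Submodule K H} (hi : IsLieIdeal i) :
    IsLieIdeal ((i ⊔ Ho) ⊓ He ⊔ (i ⊔ He) ⊓ Ho) :=
  isLieIdeal_sup hg.isCompl.sup_eq_top
    (fun a ha _ hx => lie_mem_sup_inf hi (hg.lie_even_odd a ha) (hg.lie_even_even a ha) hx)
    (fun b hb _ hx => lie_mem_sup_inf hi (hg.lie_odd_odd b hb) (hg.lie_odd_even b hb) hx)
    (fun a ha _ hy => lie_mem_sup_inf hi (hg.lie_even_even a ha) (hg.lie_even_odd a ha) hy)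
    (fun b hb _ hy => lie_mem_sup_inf hi (hg.lie_odd_even b hb) (hg.lie_odd_odd b hb) hy)

theorem graphMap_lie_graphMap [CharP K 2] {i : Submodule K H} (h : IsCompl i Ho)
    (hi : IsLieIdeal i) (hbot : i ⊓ He = ⊥) {x y : H} (hx : x ∈ He) (hy : y ∈ He) :
    ⁅graphMap h y, graphMap h x⁆ = ⁅y, x⁆ := by
  set f := graphMap h
  have hchar : ∀ v : H, v + v = 0 := fun v => by
    rw [← two_smul K v, CharTwo.two_eq_zero, zero_smul]
  have hodd : ⁅y, f x⁆ + ⁅f y, x⁆ = 0 := by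
    rw [lie_graphMap h hi (hg.lie_even_odd y hy), ← lie_skew (f y) x,
      lie_graphMap h hi (hg.lie_even_odd x hx), ← map_neg, lie_skew, hchar]
  have hexpand : ⁅y + f y, x + f x⁆ = ⁅y, x⁆ + ⁅f y, f x⁆ :=
    calc ⁅y + f y, x + f x⁆ = ⁅y, x⁆ + ⁅f y, f x⁆ + (⁅y, f x⁆ + ⁅f y, x⁆) := by
          rw [add_lie, lie_add, lie_add]; abel
      _ = ⁅y, x⁆ + ⁅f y, f x⁆ := by rw [hodd, add_zero]
  have heven : ⁅y, x⁆ + ⁅f y, f x⁆ ∈ i ⊓ He :=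
    ⟨hexpand ▸ hi _ _ (add_graphMap_mem h x),
      add_mem (hg.lie_even_even y hy x hx)
        (hg.lie_odd_odd _ (graphMap_mem h y) _ (graphMap_mem h x))⟩
  rw [hbot, mem_bot] at heven
  exact add_left_cancel (heven.trans (hchar _).symm)

variable (hsimple : ∀ J : Submodule K H, IsGraded He Ho J → IsLieIdeal J → J = ⊥ ∨ J = ⊤)
  {i : Submodule K H} (hi : IsLieIdeal i)
include hsimple hi

theorem inf_eq_bot_of_ne_top (hi_top : i ≠ ⊤) : i ⊓ He = ⊥ ∧ i ⊓ Ho = ⊥ := by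
  refine sup_eq_bot_iff.mp ((hsimple _ (isGraded_sup inf_le_right inf_le_right)
    (hg.isLieIdeal_inf_sup_inf hi)).resolve_right fun hcore => hi_top ?_)
  exact top_le_iff.mp (hcore ▸ sup_le inf_le_left inf_le_left)

theorem sup_eq_top_of_ne_bot (hi_bot : i ≠ ⊥) : i ⊔ He = ⊤ ∧ i ⊔ Ho = ⊤ := by
  have hspan := hg.isCompl.sup_eq_top
  have hhull := (hsimple _ (isGraded_sup inf_le_right inf_le_right)
    (hg.isLieIdeal_sup_inf_sup_inf hi)).resolve_left fun hhull =>
      hi_bot (eq_bot_iff.mpr (hhull ▸ le_sup_inf_sup_inf hspan))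
  have hE := eq_of_le_of_le_of_disjoint_of_sup_eq_top inf_le_right inf_le_right
    hg.isCompl.disjoint hhull
  have hO := eq_of_le_of_le_of_disjoint_of_sup_eq_top inf_le_right inf_le_right
    hg.isCompl.disjoint.symm ((sup_comm _ _).trans hhull)
  constructor
  · exact top_unique (hspan ▸ sup_le le_sup_right (inf_eq_right.mp hO))
  · exact top_unique (hspan ▸ sup_le (inf_eq_right.mp hE) le_sup_right)

end IsZ2Grading

end Lie

/-- Over a field of characteristic 2, let `h = He ⊕ Ho` be a `ℤ/2`-graded Lie algebra
with no nonzero proper graded ideals, and let `i` be a nonzero proper (not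
necessarily graded) ideal of `h`.  Then there is a linear bijection
`f : He → Ho` such that `i = { x + f x : x ∈ He }`, and `f` satisfies
`[y, f x] = f [y, x]` and `[f y, f x] = [y, x]` for all `x, y ∈ He`. -/
theorem nongraded_ideal_graph (K : Type*) [Field K] [CharP K 2]
    (H : Type*) [LieRing H] [LieAlgebra K H]
    (He Ho : Submodule K H)
    (hdecomp : He ⊔ Ho = ⊤) (hdisj : He ⊓ Ho = ⊥)
    (hgr_ee : ∀ x ∈ He, ∀ y ∈ He, ⁅x, y⁆ ∈ He)
    (hgr_eo : ∀ x ∈ He, ∀ y ∈ Ho, ⁅x, y⁆ ∈ Ho)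
    (hgr_oo : ∀ x ∈ Ho, ∀ y ∈ Ho, ⁅x, y⁆ ∈ He)
    (hnograded : ∀ J : Submodule K H,
      (J = (J ⊓ He) ⊔ (J ⊓ Ho)) → (∀ z : H, ∀ w ∈ J, ⁅z, w⁆ ∈ J) →
      J = ⊥ ∨ J = ⊤)
    (i : Submodule K H)
    (hideal : ∀ z : H, ∀ w ∈ i, ⁅z, w⁆ ∈ i)
    (hne_bot : i ≠ ⊥) (hne_top : i ≠ ⊤) :
    ∃ f : H →ₗ[K] H,
      (∀ x ∈ He, f x ∈ Ho) ∧
      (∀ x ∈ He, ∀ y ∈ He, f x = f y → x = y) ∧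
      (∀ w ∈ Ho, ∃ x ∈ He, f x = w) ∧
      (∀ z : H, z ∈ i ↔ ∃ x ∈ He, z = x + f x) ∧
      (∀ x ∈ He, ∀ y ∈ He, ⁅y, f x⁆ = f ⁅y, x⁆) ∧
      (∀ x ∈ He, ∀ y ∈ He, ⁅f y, f x⁆ = ⁅y, x⁆) := by
  have hg : IsZ2Grading He Ho :=
    ⟨⟨disjoint_iff.mpr hdisj, codisjoint_iff.mpr hdecomp⟩, hgr_ee, hgr_eo, hgr_oo⟩
  obtain ⟨hbotE, hbotO⟩ := hg.inf_eq_bot_of_ne_top hnograded hideal hne_top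
  obtain ⟨htopE, htopO⟩ := hg.sup_eq_top_of_ne_bot hnograded hideal hne_bot
  have hiO : IsCompl i Ho := ⟨disjoint_iff.mpr hbotO, codisjoint_iff.mpr htopO⟩
  refine ⟨graphMap hiO, fun x _ => graphMap_mem hiO x,
    fun x hx y hy => graphMap_injOn hiO hbotE hx hy,
    graphMap_surjOn hiO htopE, fun z => mem_iff_exists_eq_add_graphMap hiO hdecomp,
    fun x _ y hy => lie_graphMap hiO hideal (hgr_eo y hy) x,
    fun x hx y hy => hg.graphMap_lie_graphMap hiO hideal hbotE hx hy⟩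
end

section
/- Over a field of characteristic 2, the even-trace etr(A,B) := tr(A) on q(n) does not vanish on the derived superalgebra q(n)^{(1)} (for n ≥ 1), since the square of the odd element (0,B) equals (B²,0) and tr(B²) can be nonzero; but etr does vanish on the derived superalgebra sq(n)^{(1)} of the queertraceless subalgebra sq(n) = { (A,B) : tr(B) = 0 }. -/
/-- The bracket of the queerification `q(n)` (characteristic 2): elements are pairs
`(A,B)` of `n × n` matrices, with
`[(A,B),(A',B')] = (⁅A,A'⁆ + B*B' + B'*B, ⁅A,B'⁆ + ⁅A',B⁆)` and squaring of the odd
element `(0,B)` equal to `(B*B, 0)`. -/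
def qBracket {K : Type*} [Field K] {n : ℕ}
    (p q : Matrix (Fin n) (Fin n) K × Matrix (Fin n) (Fin n) K) :
    Matrix (Fin n) (Fin n) K × Matrix (Fin n) (Fin n) K :=
  (⁅p.1, q.1⁆ + (p.2 * q.2 + q.2 * p.2), ⁅p.1, q.2⁆ + ⁅q.1, p.2⁆)

/-!
In characteristic 2 the even part of every bracket is traceless, since `tr ⁅A, A'⁆ = 0` and
`tr (B B' + B' B) = 2 tr (B B') = 0`. The remaining generators are squares `(B², 0)`, and
`tr (B²) = (tr B)²` because the off-diagonal terms `B i j * B j i` of `tr (B²)` cancel in pairs;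
so they are traceless exactly when `tr B = 0`, which fails for a matrix unit `E i i`.
-/

namespace CharTwo

variable {R ι : Type*} [CommSemiring R] [CharP R 2]

theorem sum_sum_eq_sum_diag_of_symm (s : Finset ι) {f : ι → ι → R}
    (hf : ∀ i j, f i j = f j i) : ∑ i ∈ s, ∑ j ∈ s, f i j = ∑ i ∈ s, f i i := by
  classical
  induction s using Finset.induction_on with
  | empty => simp
  | insert a s ha ih =>
    have hcross : ∑ j ∈ s, f a j + ∑ i ∈ s, f i a = 0 := by
      simp_rw [hf a, add_self_eq_zero]
    simp only [Finset.sum_insert ha, Finset.sum_add_distrib, ih]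
    rw [← add_assoc, add_assoc (f a a), hcross, add_zero]

end CharTwo

namespace Matrix

theorem trace_mul_self_of_charTwo {R m : Type*} [CommSemiring R] [CharP R 2] [Fintype m]
    (A : Matrix m m R) : trace (A * A) = trace A ^ 2 := by
  simp only [trace, diag, mul_apply]
  rw [CharTwo.sum_sq]
  simp only [sq]
  exact CharTwo.sum_sum_eq_sum_diag_of_symm _ fun i j ↦ mul_comm (A i j) (A j i)

end Matrix

theorem trace_fst_qBracket {K : Type*} [Field K] [CharP K 2] {n : ℕ}
    (p q : Matrix (Fin n) (Fin n) K × Matrix (Fin n) (Fin n) K) :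
    Matrix.trace (qBracket p q).1 = 0 := by
  simp only [qBracket, Ring.lie_def, Matrix.trace_add, Matrix.trace_sub,
    Matrix.trace_mul_comm q.1, Matrix.trace_mul_comm q.2, sub_self, CharTwo.add_self_eq_zero]

/-- Over a field of characteristic 2 and for `n ≥ 1`, the even-trace
`etr (A,B) = tr A` does not vanish on the derived superalgebra `q(n)^{(1)}`: there
is an odd element `(0,B)` whose square `(B*B, 0)` has `tr (B*B) ≠ 0`.  However,
`etr` does vanish on the derived superalgebra `sq(n)^{(1)}` of the queertraceless
subalgebra `sq(n) = {(A,B) : tr B = 0}`. -/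
theorem etr_on_derived (K : Type*) [Field K] [CharP K 2] (n : ℕ) (hn : 1 ≤ n) :
    (∃ B : Matrix (Fin n) (Fin n) K, Matrix.trace (B * B) ≠ 0) ∧
    (∀ z ∈ Submodule.span K
      ({w : Matrix (Fin n) (Fin n) K × Matrix (Fin n) (Fin n) K |
          ∃ p q, Matrix.trace p.2 = 0 ∧ Matrix.trace q.2 = 0 ∧ w = qBracket p q} ∪
        {w | ∃ B : Matrix (Fin n) (Fin n) K, Matrix.trace B = 0 ∧ w = (B * B, 0)}),
      Matrix.trace (Prod.fst z) = 0) := by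
  refine ⟨?_, fun z hz ↦ ?_⟩
  · let i : Fin n := ⟨0, hn⟩
    refine ⟨Matrix.single i i 1, ?_⟩
    simp [Matrix.single_mul_single_same, Matrix.trace_single_eq_same]
  · let etr := Matrix.traceLinearMap (Fin n) K K ∘ₗ
      LinearMap.fst K (Matrix (Fin n) (Fin n) K) (Matrix (Fin n) (Fin n) K)
    refine (Submodule.span_le (p := LinearMap.ker etr)).mpr ?_ hz
    rintro w (⟨p, q, -, -, rfl⟩ | ⟨B, hB, rfl⟩)
    · exact trace_fst_qBracket p q
    · change Matrix.trace (B * B) = 0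
      rw [Matrix.trace_mul_self_of_charTwo, hB, zero_pow two_ne_zero]
end

section
/- Let g be a restricted Lie superalgebra over a field of characteristic 2 with 2|4-structure ([2] on g_even, squaring on g_odd). Define a map [2] on all of g by (x+y)^{[2]} := x^{[2]} + y² + [x,y] for x ∈ g_even, y ∈ g_odd (where y² is the squaring). Then this map satisfies [z^{[2]}, w] = [z,[z,w]] for every z ∈ g and w ∈ g, i.e., the desuperization F(g) is a restricted Lie algebra (2|2-structure). -/
theorem CharTwo.neg_eq_of_module {R M : Type*} [Ring R] [CharP R 2] [AddCommGroup M] [Module R M]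
    (v : M) : -v = v := by
  rw [← neg_one_smul R v, CharTwo.neg_eq, one_smul]

/-- By Jacobi, `⁅⁅a, b⁆, w⁆ = ⁅a, ⁅b, w⁆⁆ - ⁅b, ⁅a, w⁆⁆`, which in characteristic 2 is the sum of the
cross terms of `⁅a + b, ⁅a + b, w⁆⁆`. -/
theorem CharTwo.lie_add_lie_add {R L : Type*} [CommRing R] [CharP R 2] [LieRing L]
    [LieAlgebra R L] (a b w : L) :
    ⁅a + b, ⁅a + b, w⁆⁆ = ⁅a, ⁅a, w⁆⁆ + ⁅b, ⁅b, w⁆⁆ + ⁅⁅a, b⁆, w⁆ := by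
  rw [lie_lie, sub_eq_add_neg, CharTwo.neg_eq_of_module (R := R)]
  simp only [add_lie, lie_add]
  abel

theorem two_two_structure_general (K : Type*) [Field K] [CharP K 2]
    (V : Type*) [LieRing V] [LieAlgebra K V]
    (Ve Vo : Submodule K V)
    (sqE sqO : V → V)
    (hE : ∀ x ∈ Ve, ∀ w : V, ⁅sqE x, w⁆ = ⁅x, ⁅x, w⁆⁆)
    (hO : ∀ y ∈ Vo, ∀ w : V, ⁅sqO y, w⁆ = ⁅y, ⁅y, w⁆⁆) :
    ∀ x ∈ Ve, ∀ y ∈ Vo, ∀ w : V,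
      ⁅sqE x + sqO y + ⁅x, y⁆, w⁆ = ⁅x + y, ⁅x + y, w⁆⁆ := by
  intro x hx y hy w
  rw [CharTwo.lie_add_lie_add (R := K), add_lie, add_lie, hE x hx, hO y hy]

/-- Over a field of characteristic 2, let `g = Ve ⊕ Vo` be a Lie superalgebra
(modelled on its desuperization `F(g)`) with a `2|4`-structure: a 2-operation
`sqE` on the even part and the intrinsic squaring `sqO` on the odd part, both with
`ad (square) = (ad)²` on the whole of `g`.  Then the map
`(x + y)^{[2]} := sqE x + sqO y + ⁅x, y⁆` (for `x` even, `y` odd) satisfies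
`[z^{[2]}, w] = [z, [z, w]]` for all `z, w`; i.e. `F(g)` is a restricted Lie
algebra (`2|2`-structure). -/
theorem two_two_structure (K : Type*) [Field K] [CharP K 2]
    (V : Type*) [LieRing V] [LieAlgebra K V]
    (Ve Vo : Submodule K V)
    (hdecomp : Ve ⊔ Vo = ⊤) (hdisj : Ve ⊓ Vo = ⊥)
    (hgr_ee : ∀ x ∈ Ve, ∀ y ∈ Ve, ⁅x, y⁆ ∈ Ve)
    (hgr_eo : ∀ x ∈ Ve, ∀ y ∈ Vo, ⁅x, y⁆ ∈ Vo)
    (hgr_oo : ∀ x ∈ Vo, ∀ y ∈ Vo, ⁅x, y⁆ ∈ Ve)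
    (sqE sqO : V → V)
    (hE : ∀ x ∈ Ve, ∀ w : V, ⁅sqE x, w⁆ = ⁅x, ⁅x, w⁆⁆)
    (hO : ∀ y ∈ Vo, ∀ w : V, ⁅sqO y, w⁆ = ⁅y, ⁅y, w⁆⁆) :
    ∀ x ∈ Ve, ∀ y ∈ Vo, ∀ w : V,
      ⁅sqE x + sqO y + ⁅x, y⁆, w⁆ = ⁅x + y, ⁅x + y, w⁆⁆ :=
  two_two_structure_general K V Ve Vo sqE sqO hE hO
end
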